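/- Consider finite strings over the four-letter alphabet {E, A, Ei, Ai} (representing ∃, ∀, ∃^∞, ∀^∞). Define inductively a classification of nonempty strings into classes Σ n and Π n (n ≥ 1): the one-letter strings E, A, Ei, Ai are Σ 1, Π 1, Π 2, Σ 2 respectively; if w is Σ n then E·w is Σ n, A·w is Π (n+1), Ei·w is Π (n+1), Ai·w is Σ (n+2); if w is Π n then E·w is Σ (n+1), A·w is Π n, Ei·w is Π (n+2), Ai·w is Σ (n+1). Then every string classified as Σ 3 contains one of the strings [E, Ei], [E, A, E], [Ai, Ei], [Ai, E] as a (not necessarily contiguous) subsequence. -/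
import Mathlib


/-- The four quantifiers: ∃, ∀, ∃^∞, ∀^∞. -/
inductive Quant
  | E | A | Ei | Ai
deriving DecidableEq

open Quant

mutual
/-- `IsSigma n w` : the quantifier-pattern `w` is Σ_n. -/
inductive IsSigma : ℕ → List Quant → Prop
  | baseE : IsSigma 1 [E]
  | baseAi : IsSigma 2 [Ai]
  | consE_sigma {n w} : IsSigma n w → IsSigma n (E :: w)
  | consAi_sigma {n w} : IsSigma n w → IsSigma (n + 2) (Ai :: w)
  | consE_pi {n w} : IsPi n w → IsSigma (n + 1) (E :: w)
  | consAi_pi {n w} : IsPi n w → IsSigma (n + 1) (Ai :: w)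

/-- `IsPi n w` : the quantifier-pattern `w` is Π_n. -/
inductive IsPi : ℕ → List Quant → Prop
  | baseA : IsPi 1 [A]
  | baseEi : IsPi 2 [Ei]
  | consA_sigma {n w} : IsSigma n w → IsPi (n + 1) (A :: w)
  | consEi_sigma {n w} : IsSigma n w → IsPi (n + 1) (Ei :: w)
  | consA_pi {n w} : IsPi n w → IsPi n (A :: w)
  | consEi_pi {n w} : IsPi n w → IsPi (n + 2) (Ei :: w)
end

lemma no_pi0 : ∀ w, ¬ IsPi 0 w := by
  intro w
  induction w with
  | nil => intro h; cases h
  | cons a t ih => intro h; cases h with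
    | consA_pi h' => exact ih h'

lemma sigma1_mem : ∀ w, IsSigma 1 w → E ∈ w := by
  intro w h
  cases h with
  | baseE => simp
  | consE_sigma h' => simp
  | consE_pi h' => exact absurd h' (no_pi0 _)
  | consAi_pi h' => exact absurd h' (no_pi0 _)

lemma pi2_key : ∀ w, IsPi 2 w → Ei ∈ w ∨ [A, E].Sublist w := by
  intro w
  induction w with
  | nil => intro h; cases h
  | cons a t ih =>
    intro h
    cases h with
    | baseEi => left; simp
    | consA_sigma h' =>
      right
      exact List.Sublist.cons₂ _ (List.singleton_sublist.mpr (sigma1_mem _ h'))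
    | consEi_sigma _ => left; simp
    | consA_pi h' =>
      rcases ih h' with h1 | h1
      · left; exact List.mem_cons_of_mem _ h1
      · right; exact h1.cons _
    | consEi_pi h' => exact absurd h' (no_pi0 _)

/-- every Σ₃ quantifier-pattern contains ∃∃^∞, ∃∀∃, ∀^∞∃^∞ or ∀^∞∃
as a subsequence. -/
theorem stmt_6 (w : List Quant) (hw : IsSigma 3 w) :
    [E, Ei].Sublist w ∨ [E, A, E].Sublist w ∨ [Ai, Ei].Sublist w ∨ [Ai, E].Sublist w := by
  induction w with
  | nil => cases hw
  | cons a t ih =>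
    cases hw with
    | consE_sigma h' =>
      rcases ih h' with h1 | h1 | h1 | h1
      · exact Or.inl (h1.cons _)
      · exact Or.inr (Or.inl (h1.cons _))
      · exact Or.inr (Or.inr (Or.inl (h1.cons _)))
      · exact Or.inr (Or.inr (Or.inr (h1.cons _)))
    | consAi_sigma h' =>
      exact Or.inr (Or.inr (Or.inr
        (List.Sublist.cons₂ _ (List.singleton_sublist.mpr (sigma1_mem _ h')))))
    | consE_pi h' =>
      rcases pi2_key _ h' with h1 | h1
      · exact Or.inl (List.Sublist.cons₂ _ (List.singleton_sublist.mpr h1))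
      · exact Or.inr (Or.inl (h1.cons₂ _))
    | consAi_pi h' =>
      rcases pi2_key _ h' with h1 | h1
      · exact Or.inr (Or.inr (Or.inl
          (List.Sublist.cons₂ _ (List.singleton_sublist.mpr h1))))
      · exact Or.inr (Or.inr (Or.inr
          (List.Sublist.cons₂ _ (List.singleton_sublist.mpr
            (h1.subset (by simp))))))
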